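/- Let g₀ ∈ Matₙ(ℝ) be symmetric and positive definite, let A ∈ Matₙ(ℝ), and define g(u) := exp(uA)·g₀·exp(uAᵀ) for u ∈ ℝ. Then for every u ∈ ℝ, tr( (1/4)·(g(u)⁻¹·g'(u))² − (1/2)·g(u)⁻¹·g''(u) ) = −(1/4)·tr( (A + g₀·Aᵀ·g₀⁻¹)² ). -/

import Mathlib

/-!
Along the orbit, `g' = Ag + gAᵀ` and `g'' = Ag' + g'Aᵀ`. Hence `X := g⁻¹g' = g⁻¹Ag + Aᵀ` and
`g⁻¹g'' = (g⁻¹Ag)X + XAᵀ`, whose trace is `tr((g⁻¹Ag + Aᵀ)X) = tr(X²)`; so the Ricci coefficient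
is `-¼ tr(X²)`. Now `X = g⁻¹(A + gAᵀg⁻¹)g`, and since `P = exp(uA)` commutes with `A` and
`g = P g₀ Pᵀ`, also `A + gAᵀg⁻¹ = P(A + g₀Aᵀg₀⁻¹)P⁻¹`; traces of powers are conjugation invariant.
-/

open Matrix

attribute [local instance] Matrix.frobeniusNormedAddCommGroup Matrix.frobeniusNormedSpace

/-- The orbit `g(u) = exp(uA) g₀ exp(uAᵀ)` of a one-parameter subgroup of `GL(n,ℝ)`. -/
noncomputable def orbitCurve {n : ℕ} (g₀ A : Matrix (Fin n) (Fin n) ℝ) :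
    ℝ → Matrix (Fin n) (Fin n) ℝ :=
  fun u => NormedSpace.exp (u • A) * g₀ * NormedSpace.exp (u • Aᵀ)

section Algebra

variable {m R : Type*} [Fintype m] [DecidableEq m] [CommRing R]

theorem Matrix.trace_conj_pow' {M : Matrix m m R} (h : IsUnit M) (N : Matrix m m R) (k : ℕ) :
    trace ((M⁻¹ * N * M) ^ k) = trace (N ^ k) := by
  rw [← h.unit_spec, ← coe_units_inv, Units.conj_pow', trace_units_conj']

theorem Matrix.trace_conj_pow {M : Matrix m m R} (h : IsUnit M) (N : Matrix m m R) (k : ℕ) :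
    trace ((M * N * M⁻¹) ^ k) = trace (N ^ k) := by
  rw [← h.unit_spec, ← coe_units_inv, Units.conj_pow, trace_units_conj]

theorem Matrix.inv_mul_add_mul_transpose {g : Matrix m m R} (hg : IsUnit g.det)
    (A : Matrix m m R) : g⁻¹ * (A * g + g * Aᵀ) = g⁻¹ * A * g + Aᵀ := by
  rw [Matrix.mul_add, nonsing_inv_mul_cancel_left (h := hg), Matrix.mul_assoc]

theorem Matrix.trace_inv_mul_add_mul_transpose_sq {g : Matrix m m R} (hg : IsUnit g.det)
    (A : Matrix m m R) :
    trace ((g⁻¹ * (A * g + g * Aᵀ)) ^ 2) = trace ((A + g * Aᵀ * g⁻¹) ^ 2) := by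
  have hconj : g⁻¹ * A * g + Aᵀ = g⁻¹ * (A + g * Aᵀ * g⁻¹) * g := by
    simp only [Matrix.mul_add, Matrix.add_mul, Matrix.mul_assoc,
      nonsing_inv_mul_cancel_left (h := hg), nonsing_inv_mul _ hg, Matrix.mul_one]
  rw [inv_mul_add_mul_transpose hg, hconj, trace_conj_pow' ((isUnit_iff_isUnit_det g).mpr hg)]

theorem Matrix.trace_inv_mul_second_eq {g : Matrix m m R} (hg : IsUnit g.det) (A : Matrix m m R) :
    trace (g⁻¹ * (A * (A * g + g * Aᵀ) + (A * g + g * Aᵀ) * Aᵀ)) =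
      trace ((g⁻¹ * (A * g + g * Aᵀ)) ^ 2) := by
  have hsplit (g' : Matrix m m R) :
      g⁻¹ * (A * g' + g' * Aᵀ) = g⁻¹ * A * g * (g⁻¹ * g') + g⁻¹ * g' * Aᵀ := by
    simp only [Matrix.mul_add, Matrix.mul_assoc, mul_nonsing_inv_cancel_left (h := hg)]
  rw [hsplit, trace_add, trace_mul_comm (g⁻¹ * _) Aᵀ, ← trace_add, ← Matrix.add_mul,
    ← inv_mul_add_mul_transpose hg, sq]

theorem Matrix.add_congr_mul_transpose_mul_inv {P A : Matrix m m R} (hP : IsUnit P.det)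
    (hPA : Commute P A) (g₀ : Matrix m m R) :
    A + P * g₀ * Pᵀ * Aᵀ * (P * g₀ * Pᵀ)⁻¹ = P * (A + g₀ * Aᵀ * g₀⁻¹) * P⁻¹ := by
  have hPt : IsUnit Pᵀ.det := by rwa [det_transpose]
  have hAPt : Pᵀ * Aᵀ = Aᵀ * Pᵀ := by rw [← transpose_mul, ← transpose_mul, hPA.eq]
  calc A + P * g₀ * Pᵀ * Aᵀ * (P * g₀ * Pᵀ)⁻¹
      = A * P * P⁻¹ + P * g₀ * (Pᵀ * Aᵀ * Pᵀ⁻¹) * g₀⁻¹ * P⁻¹ := by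
        simp only [Matrix.mul_inv_rev, mul_nonsing_inv_cancel_right (h := hP), Matrix.mul_assoc]
    _ = P * (A + g₀ * Aᵀ * g₀⁻¹) * P⁻¹ := by
        rw [hAPt, mul_nonsing_inv_cancel_right (h := hPt), ← hPA.eq]
        simp only [Matrix.mul_add, Matrix.add_mul, Matrix.mul_assoc]

end Algebra

theorem hasDerivAt_exp_smul_mul_mul_exp_smul {𝔸 : Type*} [NormedRing 𝔸] [NormedAlgebra ℝ 𝔸]
    [CompleteSpace 𝔸] (a x b : 𝔸) (u : ℝ) :
    HasDerivAt (fun t : ℝ => NormedSpace.exp (t • a) * x * NormedSpace.exp (t • b))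
      (a * (NormedSpace.exp (u • a) * x * NormedSpace.exp (u • b)) +
        NormedSpace.exp (u • a) * x * NormedSpace.exp (u • b) * b) u := by
  refine (((hasDerivAt_exp_smul_const' a u).mul_const x).mul
    (hasDerivAt_exp_smul_const b u)).congr_deriv ?_
  simp only [mul_assoc]

section OrbitCurve

attribute [local instance] Matrix.frobeniusNormedRing Matrix.frobeniusNormedAlgebra

variable {n : ℕ} (g₀ A : Matrix (Fin n) (Fin n) ℝ)

theorem orbitCurve_eq_mul_mul_transpose (u : ℝ) :
    orbitCurve g₀ A u = NormedSpace.exp (u • A) * g₀ * (NormedSpace.exp (u • A))ᵀ := by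
  rw [orbitCurve, ← exp_transpose, transpose_smul]

theorem isUnit_det_orbitCurve (hg₀ : IsUnit g₀.det) (u : ℝ) :
    IsUnit (orbitCurve g₀ A u).det := by
  have hE : IsUnit (NormedSpace.exp (u • A)).det := (isUnit_iff_isUnit_det _).mp (isUnit_exp _)
  rw [orbitCurve_eq_mul_mul_transpose, det_mul, det_mul, det_transpose]
  exact (hE.mul hg₀).mul hE

theorem hasDerivAt_orbitCurve (u : ℝ) :
    HasDerivAt (orbitCurve g₀ A) (A * orbitCurve g₀ A u + orbitCurve g₀ A u * Aᵀ) u :=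
  hasDerivAt_exp_smul_mul_mul_exp_smul A g₀ Aᵀ u

theorem deriv_orbitCurve :
    deriv (orbitCurve g₀ A) = fun u => A * orbitCurve g₀ A u + orbitCurve g₀ A u * Aᵀ :=
  funext fun u => (hasDerivAt_orbitCurve g₀ A u).deriv

theorem deriv_deriv_orbitCurve (u : ℝ) :
    deriv (deriv (orbitCurve g₀ A)) u =
      A * deriv (orbitCurve g₀ A) u + deriv (orbitCurve g₀ A) u * Aᵀ := by
  rw [deriv_orbitCurve]
  exact (((hasDerivAt_orbitCurve g₀ A u).const_mul A).add
    ((hasDerivAt_orbitCurve g₀ A u).mul_const Aᵀ)).deriv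

end OrbitCurve

theorem ricci_of_one_parameter_orbit {n : ℕ} (g₀ A : Matrix (Fin n) (Fin n) ℝ)
    (hpos : g₀.PosDef) (u : ℝ) :
    ((1/4 : ℝ) • ((orbitCurve g₀ A u)⁻¹ * deriv (orbitCurve g₀ A) u) ^ 2 -
     (1/2 : ℝ) • ((orbitCurve g₀ A u)⁻¹ * deriv (deriv (orbitCurve g₀ A)) u)).trace
    = -(1/4) * ((A + g₀ * Aᵀ * g₀⁻¹) ^ 2).trace := by
  have hg : IsUnit (orbitCurve g₀ A u).det :=
    isUnit_det_orbitCurve g₀ A ((isUnit_iff_isUnit_det g₀).mp hpos.isUnit) u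
  have hE : IsUnit (NormedSpace.exp (u • A)) := isUnit_exp _
  have hEA : Commute (NormedSpace.exp (u • A)) A := ((Commute.refl A).smul_left u).exp_left
  have hconj : A + orbitCurve g₀ A u * Aᵀ * (orbitCurve g₀ A u)⁻¹ =
      NormedSpace.exp (u • A) * (A + g₀ * Aᵀ * g₀⁻¹) * (NormedSpace.exp (u • A))⁻¹ := by
    rw [orbitCurve_eq_mul_mul_transpose]
    exact add_congr_mul_transpose_mul_inv ((isUnit_iff_isUnit_det _).mp hE) hEA g₀
  rw [deriv_deriv_orbitCurve, trace_sub, trace_smul, trace_smul, deriv_orbitCurve,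
    trace_inv_mul_second_eq hg, trace_inv_mul_add_mul_transpose_sq hg, hconj, trace_conj_pow hE,
    smul_eq_mul, smul_eq_mul]
  ring
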